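/- arXiv:1806.02402 — 2 statements merged into one kernel-verified Lean document; each statement's English description precedes it below -/
import Mathlib

section
/- Let F, 𝒢, H be real Hilbert spaces with H separable, S : F → 𝒢 bounded linear, C = S*S, L = SS*, λ > 0, G : H → 𝒢 Hilbert–Schmidt, and B = S*G. Let Ĉ be a random positive self-adjoint bounded operator on F and B̂ a random Hilbert–Schmidt operator from H to F (defined on a common probability space, with the relevant quantities integrable). Writing β₁ = ‖C − Ĉ‖, β₂ = ‖B̂ − B‖_{HS}, and A_r(λ) = ‖(L + λI)^{-r} G‖_{HS}, one has E ‖S (Ĉ + λI)^{-1} B̂ − G‖_{HS} ≤ 2 (1 + √(E β₁²)/λ)^{1/2} ( (A_{1/2}(λ)² · E β₁² + E β₂²)/λ )^{1/2} + λ A_1(λ). -/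
/-!
With `R = (L + λ)^{-1/2}`, the resolvent identities give
`S(Ĉ+λ)⁻¹B̂ - G = S(Ĉ+λ)⁻¹(B̂ - S*G) + S(Ĉ+λ)⁻¹(C - Ĉ)S*R · RG - λ(L+λ)⁻¹G`.
Positivity of `Ĉ` gives `‖S(Ĉ+λ)⁻¹‖² ≤ (1 + β₁/λ)/λ`, and `‖S*R‖ ≤ 1`, so the Hilbert–Schmidt
norm is pointwise at most `√((1 + β₁/λ)/λ) (A_{1/2} β₁ + β₂) + λ A₁`. In expectation,
Cauchy–Schwarz splits the first term into `√(E(1 + β₁/λ)) ≤ √(1 + √(Eβ₁²)/λ)` (Jensen) and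
`√(E(A_{1/2} β₁ + β₂)²/λ) ≤ √2 √((A_{1/2}² Eβ₁² + Eβ₂²)/λ)`.
-/

noncomputable section

open ContinuousLinearMap RealInnerProductSpace MeasureTheory

/-- The squared Hilbert–Schmidt norm of `T : E → H` along a Hilbert basis of `E`. -/
def hsNormSq {ι E H : Type*} [NormedAddCommGroup E] [InnerProductSpace ℝ E]
    [NormedAddCommGroup H] [InnerProductSpace ℝ H]
    (b : HilbertBasis ι ℝ E) (T : E →L[ℝ] H) : ℝ :=
  ∑' i, ‖T (b i)‖ ^ 2

/-- The Hilbert–Schmidt norm of `T : E → H` along a Hilbert basis of `E`. -/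
def hsNorm {ι E H : Type*} [NormedAddCommGroup E] [InnerProductSpace ℝ E]
    [NormedAddCommGroup H] [InnerProductSpace ℝ H]
    (b : HilbertBasis ι ℝ E) (T : E →L[ℝ] H) : ℝ :=
  Real.sqrt (hsNormSq b T)

section HilbertSchmidt

variable {ι E X Y : Type*} [NormedAddCommGroup E] [InnerProductSpace ℝ E]
  [NormedAddCommGroup X] [InnerProductSpace ℝ X] [NormedAddCommGroup Y] [InnerProductSpace ℝ Y]
  (b : HilbertBasis ι ℝ E)

def IsHilbertSchmidt (T : E →L[ℝ] X) : Prop :=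
  Summable fun i => ‖T (b i)‖ ^ 2

variable {b}

lemma isHilbertSchmidt_iff_memℓp {T : E →L[ℝ] X} :
    IsHilbertSchmidt b T ↔ Memℓp (fun i => T (b i)) 2 := by
  rw [memℓp_gen_iff (by norm_num)]
  simp only [ENNReal.toReal_ofNat, Real.rpow_two, IsHilbertSchmidt]

lemma IsHilbertSchmidt.hsNorm_eq {T : E →L[ℝ] X} (hT : IsHilbertSchmidt b T) :
    hsNorm b T = ‖(⟨_, isHilbertSchmidt_iff_memℓp.1 hT⟩ : lp (fun _ : ι => X) 2)‖ := by
  rw [lp.norm_eq_tsum_rpow (by norm_num), hsNorm, hsNormSq, Real.sqrt_eq_rpow]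
  simp only [ENNReal.toReal_ofNat, Real.rpow_two, one_div]

lemma IsHilbertSchmidt.add {T U : E →L[ℝ] X} (hT : IsHilbertSchmidt b T)
    (hU : IsHilbertSchmidt b U) : IsHilbertSchmidt b (T + U) :=
  isHilbertSchmidt_iff_memℓp.2
    ((isHilbertSchmidt_iff_memℓp.1 hT).add (isHilbertSchmidt_iff_memℓp.1 hU))

lemma IsHilbertSchmidt.sub {T U : E →L[ℝ] X} (hT : IsHilbertSchmidt b T)
    (hU : IsHilbertSchmidt b U) : IsHilbertSchmidt b (T - U) :=
  isHilbertSchmidt_iff_memℓp.2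
    ((isHilbertSchmidt_iff_memℓp.1 hT).sub (isHilbertSchmidt_iff_memℓp.1 hU))

lemma IsHilbertSchmidt.const_smul {T : E →L[ℝ] X} (hT : IsHilbertSchmidt b T) (c : ℝ) :
    IsHilbertSchmidt b (c • T) :=
  isHilbertSchmidt_iff_memℓp.2 ((isHilbertSchmidt_iff_memℓp.1 hT).const_smul c)

lemma norm_comp_apply_sq_le (A : X →L[ℝ] Y) (T : E →L[ℝ] X) (x : E) :
    ‖(A ∘L T) x‖ ^ 2 ≤ ‖A‖ ^ 2 * ‖T x‖ ^ 2 := by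
  rw [← mul_pow]
  exact pow_le_pow_left₀ (norm_nonneg _) (A.le_opNorm _) 2

lemma IsHilbertSchmidt.comp_left {T : E →L[ℝ] X} (hT : IsHilbertSchmidt b T) (A : X →L[ℝ] Y) :
    IsHilbertSchmidt b (A ∘L T) :=
  .of_nonneg_of_le (fun _ => sq_nonneg _) (fun i => norm_comp_apply_sq_le A T (b i)) (hT.mul_left _)

lemma hsNorm_nonneg (T : E →L[ℝ] X) : 0 ≤ hsNorm b T := Real.sqrt_nonneg _

lemma sq_hsNorm (T : E →L[ℝ] X) : hsNorm b T ^ 2 = hsNormSq b T :=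
  Real.sq_sqrt (tsum_nonneg fun _ => sq_nonneg _)

lemma hsNorm_add_le {T U : E →L[ℝ] X} (hT : IsHilbertSchmidt b T) (hU : IsHilbertSchmidt b U) :
    hsNorm b (T + U) ≤ hsNorm b T + hsNorm b U := by
  rw [hT.hsNorm_eq, hU.hsNorm_eq, (hT.add hU).hsNorm_eq]
  exact norm_add_le (⟨_, isHilbertSchmidt_iff_memℓp.1 hT⟩ : lp (fun _ : ι => X) 2) ⟨_, _⟩

lemma hsNorm_sub_le {T U : E →L[ℝ] X} (hT : IsHilbertSchmidt b T) (hU : IsHilbertSchmidt b U) :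
    hsNorm b (T - U) ≤ hsNorm b T + hsNorm b U := by
  rw [hT.hsNorm_eq, hU.hsNorm_eq, (hT.sub hU).hsNorm_eq]
  exact norm_sub_le (⟨_, isHilbertSchmidt_iff_memℓp.1 hT⟩ : lp (fun _ : ι => X) 2) ⟨_, _⟩

lemma hsNorm_smul (c : ℝ) (T : E →L[ℝ] X) : hsNorm b (c • T) = |c| * hsNorm b T := by
  simp only [hsNorm, hsNormSq, smul_apply, norm_smul, mul_pow, Real.norm_eq_abs, tsum_mul_left]
  rw [Real.sqrt_mul (sq_nonneg _), Real.sqrt_sq (abs_nonneg c)]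

lemma hsNorm_comp_le {T : E →L[ℝ] X} (hT : IsHilbertSchmidt b T) (A : X →L[ℝ] Y) :
    hsNorm b (A ∘L T) ≤ ‖A‖ * hsNorm b T := by
  calc hsNorm b (A ∘L T) ≤ Real.sqrt (‖A‖ ^ 2 * hsNormSq b T) := by
        rw [hsNorm, hsNormSq, hsNormSq, ← tsum_mul_left]
        exact Real.sqrt_le_sqrt
          ((hT.comp_left A).tsum_le_tsum (fun i => norm_comp_apply_sq_le A T (b i)) (hT.mul_left _))
    _ = ‖A‖ * hsNorm b T := by
        rw [Real.sqrt_mul (sq_nonneg _), Real.sqrt_sq (norm_nonneg _), hsNorm]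

end HilbertSchmidt

section Resolvent

variable {F 𝒢 : Type*} [NormedAddCommGroup F] [InnerProductSpace ℝ F]
  [NormedAddCommGroup 𝒢] [InnerProductSpace ℝ 𝒢] {lam : ℝ} {Chat D : F →L[ℝ] F}

lemma inner_resolvent_add_norm_sq (hD : (Chat + lam • 1) ∘L D = 1) (x : F) :
    ⟪Chat (D x), D x⟫ + lam * ‖D x‖ ^ 2 = ⟪x, D x⟫ := by
  have hx : Chat (D x) + lam • D x = x := by simpa using congr($hD x)
  rw [← real_inner_self_eq_norm_sq, ← real_inner_smul_left, ← inner_add_left, hx]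

lemma norm_resolvent_apply_le (hlam : 0 < lam) (hC : Chat.IsPositive)
    (hD : (Chat + lam • 1) ∘L D = 1) (x : F) : ‖D x‖ ≤ ‖x‖ / lam := by
  have hsq : lam * ‖D x‖ ^ 2 ≤ ‖x‖ * ‖D x‖ := by
    linarith [inner_resolvent_add_norm_sq hD x, hC.inner_nonneg_left (D x),
      real_inner_le_norm x (D x)]
  rw [le_div_iff₀ hlam]
  rcases (norm_nonneg (D x)).eq_or_lt with h | h
  · rw [← h, zero_mul]; exact norm_nonneg x
  · nlinarith

variable [CompleteSpace F] [CompleteSpace 𝒢]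

lemma norm_comp_resolvent_le (hlam : 0 < lam) (S : F →L[ℝ] 𝒢) (hC : Chat.IsPositive)
    (hD : (Chat + lam • 1) ∘L D = 1) :
    ‖S ∘L D‖ ≤ √((1 + ‖adjoint S ∘L S - Chat‖ / lam) / lam) := by
  refine opNorm_le_bound _ (Real.sqrt_nonneg _) fun x => ?_
  set β := ‖adjoint S ∘L S - Chat‖
  have hDx := norm_resolvent_apply_le hlam hC hD x
  have hsq : ‖S (D x)‖ ^ 2 ≤ (1 + β / lam) / lam * ‖x‖ ^ 2 := by
    calc ‖S (D x)‖ ^ 2 = ⟪(adjoint S ∘L S - Chat) (D x), D x⟫ + ⟪Chat (D x), D x⟫ := by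
          rw [sub_apply, inner_sub_left, sub_add_cancel, comp_apply, adjoint_inner_left,
            real_inner_self_eq_norm_sq]
      _ ≤ β * ‖D x‖ * ‖D x‖ + ‖x‖ * ‖D x‖ := by
          gcongr
          · exact (real_inner_le_norm _ _).trans (by gcongr; exact le_opNorm _ _)
          · nlinarith [inner_resolvent_add_norm_sq hD x, real_inner_le_norm x (D x)]
      _ ≤ β * (‖x‖ / lam) * (‖x‖ / lam) + ‖x‖ * (‖x‖ / lam) := by gcongr
      _ = (1 + β / lam) / lam * ‖x‖ ^ 2 := by field_simp; ring
  calc ‖(S ∘L D) x‖ = √(‖S (D x)‖ ^ 2) := (Real.sqrt_sq (norm_nonneg _)).symm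
    _ ≤ √((1 + β / lam) / lam * ‖x‖ ^ 2) := Real.sqrt_le_sqrt hsq
    _ = √((1 + β / lam) / lam) * ‖x‖ := by
        rw [Real.sqrt_mul' _ (sq_nonneg _), Real.sqrt_sq (norm_nonneg _)]

end Resolvent

section Regularization

variable {F 𝒢 : Type*} [NormedAddCommGroup F] [InnerProductSpace ℝ F] [CompleteSpace F]
  [NormedAddCommGroup 𝒢] [InnerProductSpace ℝ 𝒢] [CompleteSpace 𝒢]
  {lam : ℝ} {S : F →L[ℝ] 𝒢} {Linv R : 𝒢 →L[ℝ] 𝒢}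

lemma sqrt_comp_comp_sqrt_eq_one (hL1 : (S ∘L adjoint S + lam • 1) ∘L Linv = 1)
    (hL2 : Linv ∘L (S ∘L adjoint S + lam • 1) = 1) (hRR : R ∘L R = Linv) :
    R ∘L (S ∘L adjoint S + lam • 1) ∘L R = 1 := by
  set L := S ∘L adjoint S + lam • 1
  change L * Linv = 1 at hL1
  change Linv * L = 1 at hL2
  change R * R = Linv at hRR
  have hcomm : L * R = R * L := by
    have hRLinv : R * Linv = Linv * R := by rw [← hRR, mul_assoc]
    calc L * R = L * R * (Linv * L) := by rw [hL2, mul_one]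
      _ = L * (R * Linv) * L := by simp only [mul_assoc]
      _ = R * L := by rw [hRLinv, ← mul_assoc, hL1, one_mul]
  change R * (L * R) = 1
  rw [hcomm, ← mul_assoc, hRR, hL2]

lemma norm_adjoint_comp_sqrt_le_one (hlam : 0 < lam)
    (hL1 : (S ∘L adjoint S + lam • 1) ∘L Linv = 1)
    (hL2 : Linv ∘L (S ∘L adjoint S + lam • 1) = 1) (hR : IsSelfAdjoint R) (hRR : R ∘L R = Linv) :
    ‖adjoint S ∘L R‖ ≤ 1 := by
  refine opNorm_le_bound _ zero_le_one fun x => ?_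
  have hRLR := congr($(sqrt_comp_comp_sqrt_eq_one hL1 hL2 hRR) x)
  simp only [comp_apply, add_apply, smul_apply, one_apply_eq_self, map_add,
    map_smul] at hRLR
  have hx : ‖x‖ ^ 2 = ‖adjoint S (R x)‖ ^ 2 + lam * ‖R x‖ ^ 2 := by
    have hRsymm : ∀ y z, ⟪y, R z⟫ = ⟪R y, z⟫ := fun y z => (hR.isSymmetric y z).symm
    have h := congr(⟪x, $hRLR⟫)
    rwa [inner_add_right, real_inner_smul_right, hRsymm, hRsymm, ← adjoint_inner_left,
      real_inner_self_eq_norm_sq, real_inner_self_eq_norm_sq, real_inner_self_eq_norm_sq,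
      eq_comm] at h
  have hsq : ‖adjoint S (R x)‖ ^ 2 ≤ ‖x‖ ^ 2 := by nlinarith [sq_nonneg ‖R x‖]
  rw [one_mul]
  exact (pow_le_pow_iff_left₀ (norm_nonneg _) (norm_nonneg _) two_ne_zero).1 hsq

lemma comp_resolvent_adjoint_apply {Chat D : F →L[ℝ] F} (hD : D ∘L (Chat + lam • 1) = 1)
    (hL1 : (S ∘L adjoint S + lam • 1) ∘L Linv = 1) (g : 𝒢) :
    S (D (adjoint S g))
      = g - lam • Linv g + S (D ((adjoint S ∘L S - Chat) (adjoint S (Linv g)))) := by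
  set u := adjoint S (Linv g)
  have hg : S u + lam • Linv g = g := by simpa using congr($hL1 g)
  have hD' : D (Chat u + lam • u) = u := by simpa using congr($hD u)
  have hSg : adjoint S g = (Chat u + lam • u) + (adjoint S ∘L S - Chat) u := by
    conv_lhs => rw [← hg]
    simp only [map_add, map_smul, sub_apply, comp_apply, u]
    abel
  rw [hSg, map_add, map_add, hD', ← eq_sub_of_add_eq hg]

lemma comp_resolvent_comp_sub_eq {H : Type*} [NormedAddCommGroup H] [NormedSpace ℝ H]
    {Chat D : F →L[ℝ] F} (hD : D ∘L (Chat + lam • 1) = 1)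
    (hL1 : (S ∘L adjoint S + lam • 1) ∘L Linv = 1) (hRR : R ∘L R = Linv)
    (Bhat : H →L[ℝ] F) (G : H →L[ℝ] 𝒢) :
    S ∘L D ∘L Bhat - G = (S ∘L D) ∘L (Bhat - adjoint S ∘L G)
      + ((S ∘L D) ∘L (adjoint S ∘L S - Chat) ∘L adjoint S ∘L R) ∘L (R ∘L G)
      - lam • (Linv ∘L G) := by
  ext h
  have hRR' : R (R (G h)) = Linv (G h) := congr($hRR (G h))
  simp only [sub_apply, add_apply, comp_apply, smul_apply, map_sub, hRR',
    comp_resolvent_adjoint_apply hD hL1 (G h)]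
  abel

lemma hsNorm_comp_resolvent_comp_sub_le {ι H : Type*} [NormedAddCommGroup H]
    [InnerProductSpace ℝ H] {b : HilbertBasis ι ℝ H} (hlam : 0 < lam) {Chat D : F →L[ℝ] F}
    (hC : Chat.IsPositive) (hD1 : (Chat + lam • 1) ∘L D = 1) (hD2 : D ∘L (Chat + lam • 1) = 1)
    (hL1 : (S ∘L adjoint S + lam • 1) ∘L Linv = 1)
    (hL2 : Linv ∘L (S ∘L adjoint S + lam • 1) = 1) (hR : IsSelfAdjoint R) (hRR : R ∘L R = Linv)
    {Bhat : H →L[ℝ] F} (hB : IsHilbertSchmidt b Bhat) {G : H →L[ℝ] 𝒢}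
    (hG : IsHilbertSchmidt b G) :
    hsNorm b (S ∘L D ∘L Bhat - G)
      ≤ √((1 + ‖adjoint S ∘L S - Chat‖ / lam) / lam)
          * (hsNorm b (R ∘L G) * ‖adjoint S ∘L S - Chat‖ + hsNorm b (Bhat - adjoint S ∘L G))
        + lam * hsNorm b (Linv ∘L G) := by
  set c := √((1 + ‖adjoint S ∘L S - Chat‖ / lam) / lam)
  set β := ‖adjoint S ∘L S - Chat‖
  have hSD : ‖S ∘L D‖ ≤ c := norm_comp_resolvent_le hlam S hC hD1
  have hop : ‖(S ∘L D) ∘L (adjoint S ∘L S - Chat) ∘L adjoint S ∘L R‖ ≤ c * β :=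
    calc _ ≤ ‖S ∘L D‖ * (β * ‖adjoint S ∘L R‖) :=
          (opNorm_comp_le _ _).trans (by gcongr; exact opNorm_comp_le _ _)
      _ ≤ c * (β * 1) := by gcongr; exact norm_adjoint_comp_sqrt_le_one hlam hL1 hL2 hR hRR
      _ = c * β := by rw [mul_one]
  have hdiff : IsHilbertSchmidt b (Bhat - adjoint S ∘L G) := hB.sub (hG.comp_left _)
  have hRG : IsHilbertSchmidt b (R ∘L G) := hG.comp_left R
  rw [comp_resolvent_comp_sub_eq hD2 hL1 hRR]
  calc _ ≤ hsNorm b ((S ∘L D) ∘L (Bhat - adjoint S ∘L G))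
          + hsNorm b (((S ∘L D) ∘L (adjoint S ∘L S - Chat) ∘L adjoint S ∘L R) ∘L (R ∘L G))
          + hsNorm b (lam • (Linv ∘L G)) := by
        refine (hsNorm_sub_le ((hdiff.comp_left _).add (hRG.comp_left _))
          ((hG.comp_left Linv).const_smul lam)).trans ?_
        gcongr
        exact hsNorm_add_le (hdiff.comp_left _) (hRG.comp_left _)
    _ ≤ c * hsNorm b (Bhat - adjoint S ∘L G) + c * β * hsNorm b (R ∘L G)
          + lam * hsNorm b (Linv ∘L G) := by
        rw [hsNorm_smul, abs_of_pos hlam]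
        gcongr
        · exact (hsNorm_comp_le hdiff _).trans
            (mul_le_mul_of_nonneg_right hSD (hsNorm_nonneg _))
        · exact (hsNorm_comp_le hRG _).trans
            (mul_le_mul_of_nonneg_right hop (hsNorm_nonneg _))
    _ = _ := by ring

end Regularization

section Expectation

variable {Ω : Type*} [MeasurableSpace Ω] {P : Measure Ω}

lemma memLp_two_of_integrable_sq {f : Ω → ℝ} (hf : ∀ ω, 0 ≤ f ω)
    (h : Integrable (fun ω => f ω ^ 2) P) : MemLp f 2 P := by
  have hmeas : AEStronglyMeasurable f P := by
    have hf' : f = fun ω => √(f ω ^ 2) := funext fun ω => (Real.sqrt_sq (hf ω)).symm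
    rw [hf']
    exact Real.continuous_sqrt.comp_aestronglyMeasurable h.1
  exact (memLp_two_iff_integrable_sq hmeas).2 h

lemma integral_le_sqrt_integral_sq [IsProbabilityMeasure P] {f : Ω → ℝ} (hf : MemLp f 2 P) :
    ∫ ω, f ω ∂P ≤ √(∫ ω, f ω ^ 2 ∂P) := by
  have h := ProbabilityTheory.variance_nonneg f P
  rw [ProbabilityTheory.variance_eq_sub hf, sub_nonneg] at h
  exact (le_abs_self _).trans (Real.abs_le_sqrt h)

lemma integral_mul_le_sqrt_mul_sqrt {f g : Ω → ℝ} (hf0 : ∀ ω, 0 ≤ f ω) (hg0 : ∀ ω, 0 ≤ g ω)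
    (hf : MemLp f 2 P) (hg : MemLp g 2 P) :
    ∫ ω, f ω * g ω ∂P ≤ √(∫ ω, f ω ^ 2 ∂P) * √(∫ ω, g ω ^ 2 ∂P) := by
  have h := integral_mul_le_Lp_mul_Lq_of_nonneg Real.HolderConjugate.two_two
    (ae_of_all _ hf0) (ae_of_all _ hg0) (by simpa using hf) (by simpa using hg)
  simpa only [Real.rpow_two, Real.sqrt_eq_rpow] using h

lemma integral_le_sqrt_mul_sqrt_add [IsProbabilityMeasure P] {f g Z : Ω → ℝ} {c : ℝ}
    (hf0 : ∀ ω, 0 ≤ f ω) (hg0 : ∀ ω, 0 ≤ g ω) (hf : MemLp f 2 P) (hg : MemLp g 2 P)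
    (hZ0 : ∀ ω, 0 ≤ Z ω) (hZ : ∀ ω, Z ω ≤ f ω * g ω + c) :
    ∫ ω, Z ω ∂P ≤ √(∫ ω, f ω ^ 2 ∂P) * √(∫ ω, g ω ^ 2 ∂P) + c := by
  have hfg : Integrable (fun ω => f ω * g ω) P := hf.integrable_mul hg
  calc ∫ ω, Z ω ∂P ≤ ∫ ω, (f ω * g ω + c) ∂P :=
        integral_mono_of_nonneg (ae_of_all _ hZ0) (hfg.add (integrable_const c)) (ae_of_all _ hZ)
    _ = ∫ ω, f ω * g ω ∂P + c := by
        rw [integral_add hfg (integrable_const c), integral_const]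
        simp only [probReal_univ, one_smul]
    _ ≤ √(∫ ω, f ω ^ 2 ∂P) * √(∫ ω, g ω ^ 2 ∂P) + c := by
        gcongr; exact integral_mul_le_sqrt_mul_sqrt hf0 hg0 hf hg

lemma integral_add_sq_le {X Y : Ω → ℝ} (hX : MemLp X 2 P) (hY : MemLp Y 2 P) (a : ℝ) :
    ∫ ω, (a * X ω + Y ω) ^ 2 ∂P ≤ 2 * (a ^ 2 * ∫ ω, X ω ^ 2 ∂P + ∫ ω, Y ω ^ 2 ∂P) :=
  calc ∫ ω, (a * X ω + Y ω) ^ 2 ∂P ≤ ∫ ω, 2 * (a ^ 2 * X ω ^ 2 + Y ω ^ 2) ∂P := by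
        refine integral_mono ((hX.const_mul a).add hY).integrable_sq
          (((hX.integrable_sq.const_mul _).add hY.integrable_sq).const_mul 2) fun ω => ?_
        nlinarith [sq_nonneg (a * X ω - Y ω)]
    _ = 2 * (a ^ 2 * ∫ ω, X ω ^ 2 ∂P + ∫ ω, Y ω ^ 2 ∂P) := by
        rw [integral_const_mul, integral_add (hX.integrable_sq.const_mul _) hY.integrable_sq,
          integral_const_mul]

lemma integral_le_of_le_sqrt_mul [IsProbabilityMeasure P] {lam a c : ℝ} (hlam : 0 < lam)
    (ha : 0 ≤ a) {X Y Z : Ω → ℝ} (hX0 : ∀ ω, 0 ≤ X ω) (hY0 : ∀ ω, 0 ≤ Y ω) (hX : MemLp X 2 P)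
    (hY : MemLp Y 2 P) (hZ0 : ∀ ω, 0 ≤ Z ω)
    (hZ : ∀ ω, Z ω ≤ √((1 + X ω / lam) / lam) * (a * X ω + Y ω) + c) :
    ∫ ω, Z ω ∂P
      ≤ 2 * √(1 + √(∫ ω, X ω ^ 2 ∂P) / lam)
          * √((a ^ 2 * ∫ ω, X ω ^ 2 ∂P + ∫ ω, Y ω ^ 2 ∂P) / lam) + c := by
  set f : Ω → ℝ := fun ω => √(1 + X ω / lam)
  set g : Ω → ℝ := fun ω => (a * X ω + Y ω) / √lam
  have hf_sq : ∀ ω, f ω ^ 2 = 1 + X ω / lam := fun ω =>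
    Real.sq_sqrt (by have := hX0 ω; positivity)
  have hg_sq : ∀ ω, g ω ^ 2 = (a * X ω + Y ω) ^ 2 / lam := fun ω => by
    rw [div_pow, Real.sq_sqrt hlam.le]
  have hX1 : Integrable X P := hX.integrable one_le_two
  have hf0 : ∀ ω, 0 ≤ f ω := fun ω => Real.sqrt_nonneg _
  have hg0 : ∀ ω, 0 ≤ g ω := fun ω => by have := hX0 ω; have := hY0 ω; positivity
  have hf : MemLp f 2 P := memLp_two_of_integrable_sq hf0
    ((integrable_congr (ae_of_all _ hf_sq)).2 ((integrable_const 1).add (hX1.div_const lam)))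
  have hg : MemLp g 2 P := memLp_two_of_integrable_sq hg0
    ((integrable_congr (ae_of_all _ hg_sq)).2
      (((hX.const_mul a).add hY).integrable_sq.div_const lam))
  have hf_int : ∫ ω, f ω ^ 2 ∂P ≤ 1 + √(∫ ω, X ω ^ 2 ∂P) / lam := by
    simp only [hf_sq]
    rw [integral_add (integrable_const 1) (hX1.div_const lam), integral_const, integral_div]
    simp only [probReal_univ, one_smul]
    gcongr
    exact integral_le_sqrt_integral_sq hX
  have hg_int : ∫ ω, g ω ^ 2 ∂P ≤ 2 * ((a ^ 2 * ∫ ω, X ω ^ 2 ∂P + ∫ ω, Y ω ^ 2 ∂P) / lam) := by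
    simp only [hg_sq]
    rw [integral_div, mul_div_assoc']
    exact div_le_div_of_nonneg_right (integral_add_sq_le hX hY a) hlam.le
  have hsqrt2 : √(2 : ℝ) ≤ 2 := by
    rw [Real.sqrt_le_left zero_le_two]; norm_num
  have hfg : ∀ ω, Z ω ≤ f ω * g ω + c := fun ω =>
    (hZ ω).trans_eq (by rw [Real.sqrt_div' _ hlam.le]; ring)
  calc ∫ ω, Z ω ∂P ≤ √(∫ ω, f ω ^ 2 ∂P) * √(∫ ω, g ω ^ 2 ∂P) + c :=
        integral_le_sqrt_mul_sqrt_add hf0 hg0 hf hg hZ0 hfg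
    _ ≤ √(1 + √(∫ ω, X ω ^ 2 ∂P) / lam)
          * (√2 * √((a ^ 2 * ∫ ω, X ω ^ 2 ∂P + ∫ ω, Y ω ^ 2 ∂P) / lam)) + c := by
        rw [← Real.sqrt_mul zero_le_two]
        gcongr
    _ ≤ 2 * √(1 + √(∫ ω, X ω ^ 2 ∂P) / lam)
          * √((a ^ 2 * ∫ ω, X ω ^ 2 ∂P + ∫ ω, Y ω ^ 2 ∂P) / lam) + c := by
        rw [mul_comm 2, mul_assoc]
        gcongr

end Expectation

theorem stmt_4_general {F 𝒢 H Ω : Type*}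
    [NormedAddCommGroup F] [InnerProductSpace ℝ F] [CompleteSpace F]
    [NormedAddCommGroup 𝒢] [InnerProductSpace ℝ 𝒢] [CompleteSpace 𝒢]
    [NormedAddCommGroup H] [InnerProductSpace ℝ H]
    [MeasurableSpace Ω] (P : Measure Ω) [IsProbabilityMeasure P]
    {ι : Type*} (bH : HilbertBasis ι ℝ H)
    (S : F →L[ℝ] 𝒢) (lam : ℝ) (hlam : 0 < lam)
    (G : H →L[ℝ] 𝒢) (hG : Summable fun i => ‖G (bH i)‖ ^ 2)
    (Chat : Ω → F →L[ℝ] F) (hChat : ∀ ω, (Chat ω).IsPositive)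
    (Bhat : Ω → H →L[ℝ] F) (hB : ∀ ω, Summable fun i => ‖Bhat ω (bH i)‖ ^ 2)
    (D : Ω → F →L[ℝ] F)
    (hD1 : ∀ ω, (Chat ω + lam • 1) ∘L D ω = 1)
    (hD2 : ∀ ω, D ω ∘L (Chat ω + lam • 1) = 1)
    (Linv : 𝒢 →L[ℝ] 𝒢)
    (hL1 : (S ∘L adjoint S + lam • 1) ∘L Linv = 1)
    (hL2 : Linv ∘L (S ∘L adjoint S + lam • 1) = 1)
    (LinvSqrt : 𝒢 →L[ℝ] 𝒢) (hLsPos : LinvSqrt.IsPositive)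
    (hLsSq : LinvSqrt ∘L LinvSqrt = Linv)
    (hint1 : Integrable (fun ω => ‖adjoint S ∘L S - Chat ω‖ ^ 2) P)
    (hint2 : Integrable (fun ω => hsNormSq bH (Bhat ω - adjoint S ∘L G)) P) :
    ∫ ω, hsNorm bH (S ∘L D ω ∘L Bhat ω - G) ∂P
      ≤ 2 * Real.sqrt (1 + Real.sqrt (∫ ω, ‖adjoint S ∘L S - Chat ω‖ ^ 2 ∂P) / lam)
          * Real.sqrt ((hsNorm bH (LinvSqrt ∘L G) ^ 2
                * (∫ ω, ‖adjoint S ∘L S - Chat ω‖ ^ 2 ∂P)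
              + ∫ ω, hsNormSq bH (Bhat ω - adjoint S ∘L G) ∂P) / lam)
        + lam * hsNorm bH (Linv ∘L G) := by
  have hβ₁ : MemLp (fun ω => ‖adjoint S ∘L S - Chat ω‖) 2 P :=
    memLp_two_of_integrable_sq (fun _ => norm_nonneg _) hint1
  have hβ₂ : MemLp (fun ω => hsNorm bH (Bhat ω - adjoint S ∘L G)) 2 P :=
    memLp_two_of_integrable_sq (fun _ => hsNorm_nonneg _)
      (by simpa only [sq_hsNorm] using hint2)
  have h := integral_le_of_le_sqrt_mul hlam (hsNorm_nonneg _) (fun _ => norm_nonneg _)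
    (fun _ => hsNorm_nonneg _) hβ₁ hβ₂ (fun _ => hsNorm_nonneg _) fun ω =>
      hsNorm_comp_resolvent_comp_sub_le hlam (hChat ω) (hD1 ω) (hD2 ω) hL1 hL2
        hLsPos.isSelfAdjoint hLsSq (hB ω) hG
  simpa only [sq_hsNorm] using h

/-- **Expected analytic decomposition.**  With random positive self-adjoint `Ĉ(ω)`
(with inverse `D(ω)` of `Ĉ(ω) + λI`) and random Hilbert–Schmidt `B̂(ω)`, setting
`β₁(ω) = ‖C - Ĉ(ω)‖`, `β₂(ω) = ‖B̂(ω) - B‖_{HS}` (`C = S*S`, `B = S*G`) and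
`A_r(λ) = ‖(L+λI)^{-r} G‖_{HS}` (`L = SS*`):
`E‖S(Ĉ+λI)⁻¹B̂ - G‖_{HS}
   ≤ 2 (1 + √(Eβ₁²)/λ)^{1/2} ((A_{1/2}(λ)² Eβ₁² + Eβ₂²)/λ)^{1/2} + λ A_1(λ)`. -/
theorem stmt_4 {F 𝒢 H Ω : Type*}
    [NormedAddCommGroup F] [InnerProductSpace ℝ F] [CompleteSpace F]
    [NormedAddCommGroup 𝒢] [InnerProductSpace ℝ 𝒢] [CompleteSpace 𝒢]
    [NormedAddCommGroup H] [InnerProductSpace ℝ H] [CompleteSpace H]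
    [MeasurableSpace Ω] (P : Measure Ω) [IsProbabilityMeasure P]
    {ι : Type*} [Countable ι] (bH : HilbertBasis ι ℝ H)
    (S : F →L[ℝ] 𝒢) (lam : ℝ) (hlam : 0 < lam)
    (G : H →L[ℝ] 𝒢) (hG : Summable fun i => ‖G (bH i)‖ ^ 2)
    (Chat : Ω → F →L[ℝ] F) (hChat : ∀ ω, (Chat ω).IsPositive)
    (Bhat : Ω → H →L[ℝ] F) (hB : ∀ ω, Summable fun i => ‖Bhat ω (bH i)‖ ^ 2)
    (D : Ω → F →L[ℝ] F)
    (hD1 : ∀ ω, (Chat ω + lam • 1) ∘L D ω = 1)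
    (hD2 : ∀ ω, D ω ∘L (Chat ω + lam • 1) = 1)
    (Linv : 𝒢 →L[ℝ] 𝒢)
    (hL1 : (S ∘L adjoint S + lam • 1) ∘L Linv = 1)
    (hL2 : Linv ∘L (S ∘L adjoint S + lam • 1) = 1)
    (LinvSqrt : 𝒢 →L[ℝ] 𝒢) (hLsPos : LinvSqrt.IsPositive)
    (hLsSq : LinvSqrt ∘L LinvSqrt = Linv)
    (hint0 : Integrable (fun ω => hsNorm bH (S ∘L D ω ∘L Bhat ω - G)) P)
    (hint1 : Integrable (fun ω => ‖adjoint S ∘L S - Chat ω‖ ^ 2) P)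
    (hint2 : Integrable (fun ω => hsNormSq bH (Bhat ω - adjoint S ∘L G)) P) :
    ∫ ω, hsNorm bH (S ∘L D ω ∘L Bhat ω - G) ∂P
      ≤ 2 * Real.sqrt (1 + Real.sqrt (∫ ω, ‖adjoint S ∘L S - Chat ω‖ ^ 2 ∂P) / lam)
          * Real.sqrt ((hsNorm bH (LinvSqrt ∘L G) ^ 2
                * (∫ ω, ‖adjoint S ∘L S - Chat ω‖ ^ 2 ∂P)
              + ∫ ω, hsNormSq bH (Bhat ω - adjoint S ∘L G) ∂P) / lam)
        + lam * hsNorm bH (Linv ∘L G) :=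
  stmt_4_general P bH S lam hlam G hG Chat hChat Bhat hB D hD1 hD2 Linv hL1 hL2 LinvSqrt hLsPos
    hLsSq hint1 hint2
end
end

section
/- Let X be a measurable space, P a finite set, ρ_X a probability measure on X, π(·|x) a Markov kernel from X to P, F a separable real Hilbert space, and Φ : X×P → F a bounded measurable feature map with associated kernel k((x,p),(x',p')) = ⟨Φ(x,p), Φ(x',p')⟩_F. Let C = E_{x∼ρ_X, p∼π(·|x)}[Φ(x,p) ⊗ Φ(x,p)], ζ_{x,p} = Φ(x,p)⊗Φ(x,p) − C, and T = E_{x∼ρ_X} E_{p,p'∼π(·|x) independent} Tr(ζ_{x,p} ζ_{x,p'}). Then T = 𝔠₁ − 𝔠₂, where 𝔠₁ = E_{x∼ρ_X} E_{p,p'∼π(·|x)} [k((x,p),(x,p'))²] and 𝔠₂ = E_{x,x'∼ρ_X independent} E_{p∼π(·|x), p'∼π(·|x')} [k((x,p),(x',p'))²]. -/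
/-!
Expanding the product and using `Tr((u ⊗ u) A) = ⟨u, A u⟩ = Tr(A (u ⊗ u))` gives
`Tr((u ⊗ u - C)(v ⊗ v - C)) = ⟨u, v⟩² - ⟨u, C u⟩ - ⟨v, C v⟩ + Tr(C²)`. Averaging over `p, p'`
drawn from `π(·|x)` turns both middle terms into `E_p ⟨Φ(x,p), C Φ(x,p)⟩`, whose `ρ_X`-average is
`𝔠₂`; and `Tr(C²)` is that same average once the basis sum of the trace is exchanged with the
integral defining `C`. Hence `T = 𝔠₁ - 2𝔠₂ + 𝔠₂`. The exchange is dominated because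
`∑ᵢ |⟨w, bᵢ⟩⟨bᵢ, u⟩| ≤ ‖w‖ ‖u‖` by Cauchy–Schwarz and Bessel.
-/

noncomputable section

open MeasureTheory RealInnerProductSpace ContinuousLinearMap

/-- The rank-one operator `u ⊗ v : w ↦ ⟨v, w⟩ • u`. -/
def rankOne {E H : Type*} [NormedAddCommGroup E] [InnerProductSpace ℝ E]
    [NormedAddCommGroup H] [InnerProductSpace ℝ H] (u : H) (v : E) : E →L[ℝ] H :=
  (innerSL ℝ v).smulRight u

/-- The trace of `T : E → E` along a Hilbert basis of `E`. -/
def traceAlong {ι E : Type*} [NormedAddCommGroup E] [InnerProductSpace ℝ E]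
    (b : HilbertBasis ι ℝ E) (T : E →L[ℝ] E) : ℝ :=
  ∑' i, ⟪(b i : E), T (b i)⟫

section RankOne

variable {E : Type*} [NormedAddCommGroup E] [InnerProductSpace ℝ E]

@[simp]
lemma rankOne_apply (u v w : E) : rankOne u v w = ⟪v, w⟫ • u := rfl

lemma norm_rankOne_le (u v : E) : ‖rankOne u v‖ ≤ ‖v‖ * ‖u‖ := by
  rw [rankOne, norm_smulRight_apply, innerSL_apply_norm]

lemma continuous_rankOne : Continuous fun uv : E × E => rankOne uv.1 uv.2 :=
  ((smulRightL ℝ E E).continuous.comp ((innerSL ℝ).continuous.comp continuous_snd)).clm_apply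
    continuous_fst

lemma Orthonormal.sum_abs_inner_mul_inner_le {ι : Type*} {e : ι → E} (he : Orthonormal ℝ e)
    (s : Finset ι) (u v : E) : ∑ i ∈ s, |⟪u, e i⟫ * ⟪e i, v⟫| ≤ ‖u‖ * ‖v‖ := by
  have bessel (w : E) : √(∑ i ∈ s, |⟪e i, w⟫| ^ 2) ≤ ‖w‖ := by
    have h := he.sum_inner_products_le (s := s) w
    simp only [Real.norm_eq_abs] at h
    exact (Real.sqrt_le_sqrt h).trans_eq (Real.sqrt_sq (norm_nonneg w))
  calc ∑ i ∈ s, |⟪u, e i⟫ * ⟪e i, v⟫| = ∑ i ∈ s, |⟪e i, u⟫| * |⟪e i, v⟫| := by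
        simp only [abs_mul, real_inner_comm u]
    _ ≤ √(∑ i ∈ s, |⟪e i, u⟫| ^ 2) * √(∑ i ∈ s, |⟪e i, v⟫| ^ 2) :=
        Real.sum_mul_le_sqrt_mul_sqrt s _ _
    _ ≤ ‖u‖ * ‖v‖ := mul_le_mul (bessel u) (bessel v) (Real.sqrt_nonneg _) (norm_nonneg u)

end RankOne

namespace HilbertBasis

variable {ι E : Type*} [NormedAddCommGroup E] [InnerProductSpace ℝ E]

protected theorem separableSpace [Countable ι] (b : HilbertBasis ι ℝ E) :
    TopologicalSpace.SeparableSpace E := by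
  classical
  rw [← TopologicalSpace.isSeparable_univ_iff, ← Submodule.top_coe (R := ℝ), ← b.dense_span,
    Submodule.topologicalClosure_coe]
  exact ((Set.countable_range _).isSeparable.span).closure

variable (b : HilbertBasis ι ℝ E)

lemma hasSum_inner_comp_rankOne (A : E →L[ℝ] E) (u v : E) :
    HasSum (fun i => ⟪(b i : E), (A ∘L rankOne u v) (b i)⟫) ⟪v, A u⟫ :=
  (b.hasSum_inner_mul_inner v (A u)).congr_fun fun i => by simp [inner_smul_right]

variable [CompleteSpace E]

lemma hasSum_inner_rankOne_comp (A : E →L[ℝ] E) (u v : E) :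
    HasSum (fun i => ⟪(b i : E), (rankOne u v ∘L A) (b i)⟫) ⟪v, A u⟫ := by
  rw [← adjoint_inner_left]
  exact (b.hasSum_inner_mul_inner (adjoint A v) u).congr_fun fun i => by
    simp [inner_smul_right, adjoint_inner_left, mul_comm]

lemma sum_abs_inner_rankOne_comp_le (A : E →L[ℝ] E) (u : E) (s : Finset ι) :
    ∑ i ∈ s, |⟪(b i : E), (rankOne u u ∘L A) (b i)⟫| ≤ ‖A‖ * ‖u‖ ^ 2 := by
  calc ∑ i ∈ s, |⟪(b i : E), (rankOne u u ∘L A) (b i)⟫|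
      = ∑ i ∈ s, |⟪adjoint A u, (b i : E)⟫ * ⟪(b i : E), u⟫| := by
        simp [inner_smul_right, adjoint_inner_left, mul_comm]
    _ ≤ ‖adjoint A u‖ * ‖u‖ := b.orthonormal.sum_abs_inner_mul_inner_le s _ _
    _ ≤ ‖A‖ * ‖u‖ ^ 2 := by
        rw [sq, ← mul_assoc, ← LinearIsometryEquiv.norm_map adjoint A]
        exact mul_le_mul_of_nonneg_right ((adjoint A).le_opNorm u) (norm_nonneg u)

lemma traceAlong_rankOne_sub_comp_rankOne_sub {C : E →L[ℝ] E} {t : ℝ}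
    (hC : HasSum (fun i => ⟪(b i : E), (C ∘L C) (b i)⟫) t) (u v : E) :
    traceAlong b ((rankOne u u - C) ∘L (rankOne v v - C))
      = ⟪u, v⟫ ^ 2 - ⟪u, C u⟫ - ⟪v, C v⟫ + t := by
  have huv : ⟪u, rankOne v v u⟫ = ⟪u, v⟫ ^ 2 := by
    rw [rankOne_apply, real_inner_smul_right, real_inner_comm]; ring
  have h := (((b.hasSum_inner_rankOne_comp (rankOne v v) u u).sub
    (b.hasSum_inner_rankOne_comp C u u)).sub (b.hasSum_inner_comp_rankOne C v v)).add hC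
  rw [huv] at h
  rw [traceAlong, ← h.tsum_eq]
  congr 1 with i
  simp only [sub_comp, comp_sub, sub_apply, inner_sub_right]
  ring

end HilbertBasis

lemma norm_sum_smul_le_of_sum_eq_one {P E : Type*} [Fintype P] [SeminormedAddCommGroup E]
    [NormedSpace ℝ E] {w : P → ℝ} (hw0 : ∀ p, 0 ≤ w p) (hw1 : ∑ p, w p = 1) {v : P → E} {K : ℝ}
    (hv : ∀ p, ‖v p‖ ≤ K) : ‖∑ p, w p • v p‖ ≤ K := by
  simpa using (convex_closedBall (0 : E) K).sum_mem (fun p _ => hw0 p) hw1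
    (fun p _ => mem_closedBall_zero_iff.2 (hv p))

lemma hasSum_integral_of_sum_norm_le {α ι E : Type*} [MeasurableSpace α] {μ : Measure α}
    [IsFiniteMeasure μ] [Countable ι] [NormedAddCommGroup E] [NormedSpace ℝ E]
    {f : ι → α → E} {g : α → E} (hf : ∀ i, Integrable (f i) μ)
    (hfg : ∀ a, HasSum (fun i => f i a) (g a)) {K : ℝ} (hK : ∀ s a, ∑ i ∈ s, ‖f i a‖ ≤ K) :
    HasSum (fun i => ∫ a, f i a ∂μ) (∫ a, g a ∂μ) := by
  have hsum : Summable fun i => ∫ a, ‖f i a‖ ∂μ := by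
    refine summable_of_sum_le (c := μ.real Set.univ * K)
      (fun i => integral_nonneg fun a => norm_nonneg _) fun s => ?_
    rw [← integral_finsetSum s fun i _ => (hf i).norm, ← smul_eq_mul, ← integral_const]
    exact integral_mono (integrable_finsetSum s fun i _ => (hf i).norm) (integrable_const K)
      (hK s)
  simpa only [fun a => (hfg a).tsum_eq] using hasSum_integral_of_summable_integral_norm hf hsum

lemma abs_sum_sum_mul_mul_le {P : Type*} [Fintype P] {w : P → ℝ} (hw0 : ∀ p, 0 ≤ w p)
    (hw1 : ∑ p, w p = 1) {k : P → P → ℝ} {K : ℝ} (hk : ∀ p p', |k p p'| ≤ K) :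
    |∑ p, ∑ p', w p * w p' * k p p'| ≤ K := by
  rw [← Fintype.sum_prod_type']
  refine norm_sum_smul_le_of_sum_eq_one (w := fun z : P × P => w z.1 * w z.2)
    (v := fun z => k z.1 z.2)
    (fun z => mul_nonneg (hw0 z.1) (hw0 z.2)) ?_ fun z => hk z.1 z.2
  rw [Fintype.sum_prod_type, ← Finset.sum_mul_sum, hw1, one_mul]

lemma sum_sum_mul_mul_sub_sub_add {P : Type*} [Fintype P] {w : P → ℝ} (hw1 : ∑ p, w p = 1)
    (k : P → P → ℝ) (f : P → ℝ) (t : ℝ) :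
    ∑ p, ∑ p', w p * w p' * (k p p' - f p - f p' + t)
      = ∑ p, ∑ p', w p * w p' * k p p' - 2 * ∑ p, w p * f p + t := by
  have hf : ∑ p, ∑ p', w p * w p' * f p = ∑ p, w p * f p := by
    simp [mul_right_comm _ _ (f _), ← Finset.mul_sum, hw1]
  have hf' : ∑ p, ∑ p', w p * w p' * f p' = ∑ p, w p * f p := by
    simp [mul_assoc, ← Finset.mul_sum, ← Finset.sum_mul, hw1]
  have ht : ∑ p, ∑ p', w p * w p' * t = t := by
    simp [← Finset.mul_sum, ← Finset.sum_mul, hw1]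
  simp only [mul_add, mul_sub, Finset.sum_add_distrib, Finset.sum_sub_distrib, hf, hf', ht]
  ring

section CondSecondMoment

variable {X P F : Type*} [Fintype P]
  [NormedAddCommGroup F] [InnerProductSpace ℝ F]

def condSecondMoment (π : X → P → ℝ) (Φ : X → P → F) (x : X) : F →L[ℝ] F :=
  ∑ p, π x p • rankOne (Φ x p) (Φ x p)

lemma inner_condSecondMoment_apply (π : X → P → ℝ) (Φ : X → P → F) (x : X) (v w : F) :
    ⟪v, condSecondMoment π Φ x w⟫ = ∑ p, π x p * ⟪v, rankOne (Φ x p) (Φ x p) w⟫ := by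
  simp only [condSecondMoment, sum_apply, smul_apply, inner_sum, real_inner_smul_right]

variable [MeasurableSpace X] {μ : Measure X} {π : X → P → ℝ} {Φ : X → P → F}

section Integrability

variable [IsFiniteMeasure μ] [MeasurableSpace F] [BorelSpace F] [SecondCountableTopology F]
  {M : ℝ}

lemma integrable_sum_sum_mul_mul_inner_sq
    (hπ0 : ∀ x p, 0 ≤ π x p) (hπ1 : ∀ x, ∑ p, π x p = 1) (hπm : ∀ p, Measurable fun x => π x p)
    (hΦm : ∀ p, Measurable fun x => Φ x p) (hM : ∀ x p, ‖Φ x p‖ ≤ M) :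
    Integrable (fun x => ∑ p, ∑ p', π x p * π x p' * ⟪Φ x p, Φ x p'⟫ ^ 2) μ := by
  refine .of_bound (by fun_prop) ((M * M) ^ 2) (ae_of_all _ fun x =>
    abs_sum_sum_mul_mul_le (hπ0 x) (hπ1 x) fun p p' => ?_)
  rw [abs_pow]
  exact pow_le_pow_left₀ (abs_nonneg _) ((abs_real_inner_le_norm _ _).trans
    (mul_le_mul (hM x p) (hM x p') (norm_nonneg _) ((norm_nonneg _).trans (hM x p)))) 2

lemma integrable_sum_mul_inner_apply
    (hπ0 : ∀ x p, 0 ≤ π x p) (hπ1 : ∀ x, ∑ p, π x p = 1) (hπm : ∀ p, Measurable fun x => π x p)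
    (hΦm : ∀ p, Measurable fun x => Φ x p) (hM : ∀ x p, ‖Φ x p‖ ≤ M) (A : F →L[ℝ] F) :
    Integrable (fun x => ∑ p, π x p * ⟪Φ x p, A (Φ x p)⟫) μ := by
  refine .of_bound (by fun_prop) (M * (‖A‖ * M)) (ae_of_all _ fun x =>
    norm_sum_smul_le_of_sum_eq_one (hπ0 x) (hπ1 x) fun p => ?_)
  exact (abs_real_inner_le_norm _ _).trans (mul_le_mul (hM x p)
    ((A.le_opNorm _).trans (mul_le_mul_of_nonneg_left (hM x p) (norm_nonneg A)))
    (norm_nonneg _) ((norm_nonneg _).trans (hM x p)))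

lemma integrable_condSecondMoment
    (hπ0 : ∀ x p, 0 ≤ π x p) (hπ1 : ∀ x, ∑ p, π x p = 1) (hπm : ∀ p, Measurable fun x => π x p)
    (hΦm : ∀ p, Measurable fun x => Φ x p) (hM : ∀ x p, ‖Φ x p‖ ≤ M) :
    Integrable (condSecondMoment π Φ) μ := by
  have hm : StronglyMeasurable (condSecondMoment π Φ) :=
    Finset.stronglyMeasurable_fun_sum _ fun p _ => (hπm p).stronglyMeasurable.smul
      (continuous_rankOne.comp_stronglyMeasurable
        ((hΦm p).stronglyMeasurable.prodMk (hΦm p).stronglyMeasurable))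
  refine .of_bound hm.aestronglyMeasurable (M ^ 2) (ae_of_all _ fun x =>
    norm_sum_smul_le_of_sum_eq_one (hπ0 x) (hπ1 x) fun p => (norm_rankOne_le _ _).trans ?_)
  rw [sq]
  exact mul_self_le_mul_self (norm_nonneg _) (hM x p)

end Integrability

variable [CompleteSpace F]

lemma integral_sum_mul_inner_integral_condSecondMoment
    (hS : Integrable (condSecondMoment π Φ) μ) :
    ∫ x, ∑ p, π x p * ⟪Φ x p, (∫ x', condSecondMoment π Φ x' ∂μ) (Φ x p)⟫ ∂μ
      = ∫ x, ∫ x', ∑ p, ∑ p', π x p * π x' p' * ⟪Φ x p, Φ x' p'⟫ ^ 2 ∂μ ∂μ := by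
  refine integral_congr_ae (ae_of_all _ fun x => ?_)
  have hint (u : F) : Integrable (fun x' => ⟪u, condSecondMoment π Φ x' u⟫) μ :=
    (hS.apply_continuousLinearMap u).const_inner u
  calc ∑ p, π x p * ⟪Φ x p, (∫ x', condSecondMoment π Φ x' ∂μ) (Φ x p)⟫
      = ∑ p, ∫ x', π x p * ⟪Φ x p, condSecondMoment π Φ x' (Φ x p)⟫ ∂μ := by
        simp only [integral_apply hS, integral_const_mul,
          integral_inner (hS.apply_continuousLinearMap _)]
    _ = ∫ x', ∑ p, π x p * ⟪Φ x p, condSecondMoment π Φ x' (Φ x p)⟫ ∂μ :=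
        (integral_finsetSum _ fun p _ => (hint _).const_mul _).symm
    _ = ∫ x', ∑ p, ∑ p', π x p * π x' p' * ⟪Φ x p, Φ x' p'⟫ ^ 2 ∂μ := by
        refine integral_congr_ae (ae_of_all _ fun x' => ?_)
        simp only [inner_condSecondMoment_apply, rankOne_apply, real_inner_smul_right,
          Finset.mul_sum]
        refine Finset.sum_congr rfl fun p _ => Finset.sum_congr rfl fun p' _ => ?_
        rw [real_inner_comm (Φ x' p')]
        ring

lemma hasSum_inner_integral_condSecondMoment_comp [IsFiniteMeasure μ] {ι : Type*} [Countable ι]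
    (b : HilbertBasis ι ℝ F) (hπ0 : ∀ x p, 0 ≤ π x p) (hπ1 : ∀ x, ∑ p, π x p = 1) {M : ℝ}
    (hM : ∀ x p, ‖Φ x p‖ ≤ M) (hS : Integrable (condSecondMoment π Φ) μ) (A : F →L[ℝ] F) :
    HasSum (fun i => ⟪(b i : F), ((∫ x, condSecondMoment π Φ x ∂μ) ∘L A) (b i)⟫)
      (∫ x, ∑ p, π x p * ⟪Φ x p, A (Φ x p)⟫ ∂μ) := by
  have hinner (i : ι) : ⟪(b i : F), ((∫ x, condSecondMoment π Φ x ∂μ) ∘L A) (b i)⟫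
      = ∫ x, ⟪(b i : F), condSecondMoment π Φ x (A (b i))⟫ ∂μ := by
    rw [comp_apply, integral_apply hS, integral_inner (hS.apply_continuousLinearMap _)]
  simp only [hinner]
  refine hasSum_integral_of_sum_norm_le (fun i => (hS.apply_continuousLinearMap _).const_inner _)
    (fun x => ?_) (K := ‖A‖ * M ^ 2) fun s x => ?_
  · simp only [inner_condSecondMoment_apply]
    exact hasSum_sum fun p _ => (b.hasSum_inner_rankOne_comp A _ _).mul_left (π x p)
  calc ∑ i ∈ s, ‖⟪(b i : F), condSecondMoment π Φ x (A (b i))⟫‖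
      ≤ ∑ i ∈ s, ∑ p, π x p * |⟪(b i : F), (rankOne (Φ x p) (Φ x p) ∘L A) (b i)⟫| := by
        refine Finset.sum_le_sum fun i _ => ?_
        rw [inner_condSecondMoment_apply, Real.norm_eq_abs]
        refine (Finset.abs_sum_le_sum_abs _ _).trans_eq ?_
        simp only [abs_mul, abs_of_nonneg (hπ0 x _), comp_apply]
    _ = ∑ p, π x p * ∑ i ∈ s, |⟪(b i : F), (rankOne (Φ x p) (Φ x p) ∘L A) (b i)⟫| := by
        rw [Finset.sum_comm]
        simp only [Finset.mul_sum]
    _ ≤ ∑ p, π x p * (‖A‖ * M ^ 2) := by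
        refine Finset.sum_le_sum fun p _ => mul_le_mul_of_nonneg_left ?_ (hπ0 x p)
        exact (b.sum_abs_inner_rankOne_comp_le A _ s).trans (mul_le_mul_of_nonneg_left
          (pow_le_pow_left₀ (norm_nonneg _) (hM x p) 2) (norm_nonneg A))
    _ = ‖A‖ * M ^ 2 := by rw [← Finset.sum_mul, hπ1, one_mul]

end CondSecondMoment

/-- **Characterisation of the covariance trace term.**
With `C = E[Φ(x,p)⊗Φ(x,p)]`, `ζ_{x,p} = Φ(x,p)⊗Φ(x,p) - C` and kernel
`k((x,p),(x',p')) = ⟨Φ(x,p), Φ(x',p')⟩`, the quantity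
`T = E_x E_{p,p'|x} Tr(ζ_{x,p} ζ_{x,p'})` equals `𝔠₁ - 𝔠₂`, where
`𝔠₁ = E_x E_{p,p'|x} k((x,p),(x,p'))²` and
`𝔠₂ = E_{x,x'} E_{p|x, p'|x'} k((x,p),(x',p'))²`. -/
theorem stmt_7 {X P F : Type*} [MeasurableSpace X] [Fintype P]
    [NormedAddCommGroup F] [InnerProductSpace ℝ F] [CompleteSpace F]
    [MeasurableSpace F] [BorelSpace F]
    {ι : Type*} [Countable ι] (b : HilbertBasis ι ℝ F)
    (ρX : Measure X) [IsProbabilityMeasure ρX]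
    (π : X → P → ℝ) (hπ0 : ∀ x p, 0 ≤ π x p) (hπ1 : ∀ x, ∑ p, π x p = 1)
    (hπm : ∀ p, Measurable fun x => π x p)
    (Φ : X → P → F) (hΦm : ∀ p, Measurable fun x => Φ x p)
    (hΦb : ∃ M, ∀ x p, ‖Φ x p‖ ≤ M)
    (C : F →L[ℝ] F)
    (hC : C = ∫ x, (∑ p, π x p • rankOne (Φ x p) (Φ x p)) ∂ρX)
    (T : ℝ)
    (hT : T = ∫ x, ∑ p, ∑ p', π x p * π x p' *
        traceAlong b ((rankOne (Φ x p) (Φ x p) - C)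
          ∘L (rankOne (Φ x p') (Φ x p') - C)) ∂ρX)
    (c₁ : ℝ)
    (hc₁ : c₁ = ∫ x, ∑ p, ∑ p', π x p * π x p' * ⟪Φ x p, Φ x p'⟫ ^ 2 ∂ρX)
    (c₂ : ℝ)
    (hc₂ : c₂ = ∫ x, ∫ x', ∑ p, ∑ p', π x p * π x' p' * ⟪Φ x p, Φ x' p'⟫ ^ 2 ∂ρX ∂ρX) :
    T = c₁ - c₂ := by
  obtain ⟨M, hM⟩ := hΦb
  have := b.separableSpace
  have := UniformSpace.secondCountable_of_separable F
  have hS := integrable_condSecondMoment (μ := ρX) hπ0 hπ1 hπm hΦm hM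
  change C = ∫ x, condSecondMoment π Φ x ∂ρX at hC
  set q := fun x => ∑ p, π x p * ⟪Φ x p, C (Φ x p)⟫
  have hCC : HasSum (fun i => ⟪(b i : F), (C ∘L C) (b i)⟫) (∫ x, q x ∂ρX) := by
    have h := hasSum_inner_integral_condSecondMoment_comp b hπ0 hπ1 hM hS C
    rwa [← hC] at h
  have hq : ∫ x, q x ∂ρX = c₂ := by
    rw [hc₂, ← integral_sum_mul_inner_integral_condSecondMoment hS, ← hC]
  have hpointwise (x : X) : ∑ p, ∑ p', π x p * π x p' *
      traceAlong b ((rankOne (Φ x p) (Φ x p) - C) ∘L (rankOne (Φ x p') (Φ x p') - C))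
      = ∑ p, ∑ p', π x p * π x p' * ⟪Φ x p, Φ x p'⟫ ^ 2 - 2 * q x + ∫ x, q x ∂ρX := by
    simp only [b.traceAlong_rankOne_sub_comp_rankOne_sub hCC]
    exact sum_sum_mul_mul_sub_sub_add (hπ1 x) _ _ _
  have hk := integrable_sum_sum_mul_mul_inner_sq (μ := ρX) hπ0 hπ1 hπm hΦm hM
  have hqi : Integrable q ρX := integrable_sum_mul_inner_apply hπ0 hπ1 hπm hΦm hM C
  have hkq : Integrable
      (fun x => ∑ p, ∑ p', π x p * π x p' * ⟪Φ x p, Φ x p'⟫ ^ 2 - 2 * q x) ρX :=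
    hk.sub (hqi.const_mul 2)
  rw [hT, integral_congr_ae (ae_of_all _ hpointwise), integral_add hkq (integrable_const _),
    integral_sub hk (hqi.const_mul 2), integral_const_mul, integral_const, hq, hc₁]
  simp only [probReal_univ, smul_eq_mul, one_mul]
  ring
end
end
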